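/- Let n, m, m', p, p' be natural numbers with m + m' = p + p'. Then the dimension of the space of Σ_n-equivariant linear maps from ((Fin m → Fin n) → ℝ) to ((Fin m' → Fin n) → ℝ) equals the dimension of the space of Σ_n-equivariant linear maps from ((Fin p → Fin n) → ℝ) to ((Fin p' → Fin n) → ℝ). -/

import Mathlib

/-!
A linear map `(X → ℝ) → (Y → ℝ)` between function spaces on finite `G`-sets is equivariant
exactly when its matrix, viewed as a function on `Y × X`, is invariant under the diagonal action.
For `X = [n]^m`, `Y = [n]^{m'}` we have `Y × X ≅ [n]^{m + m'}` as `Σ_n`-sets, so the equivariant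
maps form a space isomorphic to the `Σ_n`-invariant functions on `[n]^{m + m'}`, which depends
only on `m + m'`.
-/

/-- The space of `Σ_n`-equivariant linear maps
`((Fin m → Fin n) → ℝ) → ((Fin m' → Fin n) → ℝ)`, where `Σ_n` acts on each space by
`(σ • v) i = v (σ⁻¹ ∘ i)`. -/
noncomputable def equivariantMaps (n m m' : ℕ) :
    Submodule ℝ (((Fin m → Fin n) → ℝ) →ₗ[ℝ] ((Fin m' → Fin n) → ℝ)) where
  carrier := {φ | ∀ (σ : Equiv.Perm (Fin n)) (v : (Fin m → Fin n) → ℝ),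
    φ (fun i => v (⇑σ⁻¹ ∘ i)) = fun i => φ v (⇑σ⁻¹ ∘ i)}
  add_mem' := by
    intro φ ψ hφ hψ σ v
    funext i
    simp only [LinearMap.add_apply, Pi.add_apply, hφ σ v, hψ σ v]
  zero_mem' := by intro σ v; rfl
  smul_mem' := by
    intro c φ hφ σ v
    funext i
    simp only [LinearMap.smul_apply, Pi.smul_apply, hφ σ v]

open Module Matrix LinearMap

section

variable {G X Y R : Type*} [Group G] [MulAction G X] [MulAction G Y] [CommSemiring R]

variable (G X R) in
def invariantFunctions : Submodule R (X → R) where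
  carrier := {f | ∀ (g : G) x, f (g • x) = f x}
  add_mem' hf hf' g x := by simp only [Pi.add_apply, hf g x, hf' g x]
  zero_mem' _ _ := rfl
  smul_mem' c f hf g x := by simp only [Pi.smul_apply, hf g x]

variable (G X Y R) in
def equivariantLinearMaps : Submodule R ((X → R) →ₗ[R] (Y → R)) where
  carrier := {φ | ∀ (g : G) v, φ (fun x => v (g⁻¹ • x)) = fun y => φ v (g⁻¹ • y)}
  add_mem' hφ hψ g v := by simp only [LinearMap.add_apply, hφ g v, hψ g v]; rfl
  zero_mem' _ _ := rfl
  smul_mem' c φ hφ g v := by simp only [LinearMap.smul_apply, hφ g v]; rfl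

theorem equivariantMaps_eq_equivariantLinearMaps (n m m' : ℕ) :
    equivariantMaps n m m' =
      equivariantLinearMaps (Equiv.Perm (Fin n)) (Fin m → Fin n) (Fin m' → Fin n) ℝ :=
  rfl

def invariantFunctionsCongr (e : X ≃ Y) (he : ∀ (g : G) x, e (g • x) = g • e x) :
    invariantFunctions G X R ≃ₗ[R] invariantFunctions G Y R :=
  (LinearEquiv.funCongrLeft R R e.symm).ofSubmodules _ _ <| by
    ext f
    rw [Submodule.mem_map_equiv]
    show (∀ (g : G) x, f (e (g • x)) = f (e x)) ↔ ∀ (g : G) y, f (g • y) = f y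
    simp only [he]
    exact forall_congr' fun g => e.forall_congr_right (q := fun y => f (g • y) = f y)

variable [Fintype X] [DecidableEq X]

theorem mem_equivariantLinearMaps_iff (φ : (X → R) →ₗ[R] (Y → R)) :
    φ ∈ equivariantLinearMaps G X Y R ↔
      ∀ g : G, (toMatrix' φ).submatrix (g • ·) (g • ·) = toMatrix' φ := by
  obtain ⟨M, rfl⟩ := toLin'.surjective φ
  rw [LinearMap.toMatrix'_toLin']
  refine forall_congr' fun g => ?_
  have hsubmatrix (v : X → R) :
      M.submatrix (g • ·) (g • ·) *ᵥ v = (M *ᵥ (v ∘ (g⁻¹ • ·))) ∘ (g • ·) :=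
    submatrix_mulVec_equiv M v _ (MulAction.toPerm g)
  rw [← mulVec_injective.eq_iff, funext_iff]
  simp only [hsubmatrix, toLin'_apply]
  refine forall_congr' fun v => ?_
  exact (MulAction.toPerm g : Equiv.Perm Y).eq_comp_symm (M *ᵥ (v ∘ (g⁻¹ • ·))) (M *ᵥ v)

def equivariantLinearMapsEquivInvariantFunctions :
    equivariantLinearMaps G X Y R ≃ₗ[R] invariantFunctions G (Y × X) R :=
  (toMatrix' ≪≫ₗ (ofLinearEquiv R).symm ≪≫ₗ (LinearEquiv.curry R R Y X).symm).ofSubmodules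
    _ _ <| by
    ext f
    rw [Submodule.mem_map_equiv, mem_equivariantLinearMaps_iff]
    simp only [LinearEquiv.symm_trans_apply, LinearEquiv.symm_symm, LinearEquiv.apply_symm_apply,
      ← Matrix.ext_iff, submatrix_apply, coe_ofLinearEquiv, of_apply, LinearEquiv.coe_curry,
      Function.curry_apply]
    exact forall_congr' fun g => Prod.forall (p := fun p => f (g • p) = f p) |>.symm

end

theorem finrank_equivariantMaps_eq_finrank_invariantFunctions (n m m' : ℕ) :
    finrank ℝ (equivariantMaps n m m') =
      finrank ℝ (invariantFunctions (Equiv.Perm (Fin n)) (Fin (m + m') → Fin n) ℝ) := by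
  let e : (Fin (m + m') → Fin n) ≃ (Fin m' → Fin n) × (Fin m → Fin n) :=
    ((finCongr (add_comm m m')).trans finSumFinEquiv.symm).arrowCongr (.refl _) |>.trans
      (Equiv.sumArrowEquivProdArrow _ _ _)
  rw [equivariantMaps_eq_equivariantLinearMaps]
  exact (equivariantLinearMapsEquivInvariantFunctions.trans
    (invariantFunctionsCongr e fun _ _ => rfl).symm).finrank_eq

/-- The dimension of the space of `Σ_n`-equivariant linear maps
`(ℝ^n)^{⊗ m} → (ℝ^n)^{⊗ m'}` depends only on the sum `m + m'`. -/
theorem finrank_equivariantMaps_eq_of_sum_eq (n m m' p p' : ℕ) (h : m + m' = p + p') :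
    Module.finrank ℝ (equivariantMaps n m m') = Module.finrank ℝ (equivariantMaps n p p') := by
  rw [finrank_equivariantMaps_eq_finrank_invariantFunctions,
    finrank_equivariantMaps_eq_finrank_invariantFunctions, h]
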